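/- Let f : ℝⁿ → ℝ ∪ {+∞} be lower semi-continuous and semi-algebraic, S ⊆ ℝⁿ closed semi-algebraic with dom f ∩ S nonempty and unbounded, and suppose the qualification condition at infinity holds: there is R₀ > 0 with ∂^∞ f(x) ∩ (−N(x;S)) = {0} for all x ∈ (dom f ∩ S) with ‖x‖ > R₀. Then the tangency variety Γ(f,S) := {x ∈ dom f ∩ S : ∃ μ ∈ ℝ, 0 ∈ ∂f(x) + N(x;S) + μx} is nonempty and unbounded. -/

import Mathlib

open Filter Topology Pointwise Set RealInnerProductSpace

noncomputable section

abbrev Eucl (n : ℕ) := EuclideanSpace ℝ (Fin n)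

def IsSemialgebraic {n : ℕ} (S : Set (Eucl n)) : Prop :=
  ∃ (k : ℕ) (P Q : Fin k → Finset (MvPolynomial (Fin n) ℝ)),
    S = ⋃ i, {x | (∀ p ∈ P i, MvPolynomial.eval (fun j => x j) p = 0) ∧
                  (∀ q ∈ Q i, 0 < MvPolynomial.eval (fun j => x j) q)}

def regNormalCone {n : ℕ} (S : Set (Eucl n)) (x : Eucl n) : Set (Eucl n) :=
  {v | ∀ ε > 0, ∃ δ > 0, ∀ y ∈ S, ‖y - x‖ < δ → (inner ℝ v (y - x) : ℝ) ≤ ε * ‖y - x‖}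

def limNormalCone {n : ℕ} (S : Set (Eucl n)) (x : Eucl n) : Set (Eucl n) :=
  {v | ∃ xs vs : ℕ → Eucl n, (∀ k, xs k ∈ S) ∧ (∀ k, vs k ∈ regNormalCone S (xs k)) ∧
       Tendsto xs atTop (𝓝 x) ∧ Tendsto vs atTop (𝓝 v)}

def initP {n : ℕ} (z : Eucl (n + 1)) : Eucl n := WithLp.toLp 2 (fun i : Fin n => z i.castSucc)

def snocP {n : ℕ} (x : Eucl n) (a : ℝ) : Eucl (n + 1) := WithLp.toLp 2 (Fin.snoc (fun i => x i) a : Fin (n + 1) → ℝ)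

def epiSet {n : ℕ} (f : Eucl n → EReal) : Set (Eucl (n + 1)) :=
  {z | f (initP z) ≤ ((z (Fin.last n) : ℝ) : EReal)}

def limSubdiff {n : ℕ} (f : Eucl n → EReal) (x : Eucl n) : Set (Eucl n) :=
  {v | snocP v (-1) ∈ limNormalCone (epiSet f) (snocP x (f x).toReal)}

def horizonSubdiff {n : ℕ} (f : Eucl n → EReal) (x : Eucl n) : Set (Eucl n) :=
  {v | snocP v 0 ∈ limNormalCone (epiSet f) (snocP x (f x).toReal)}

def SemialgebraicFn {n : ℕ} (f : Eucl n → EReal) : Prop :=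
  IsSemialgebraic {z : Eucl (n + 1) | f (initP z) = ((z (Fin.last n) : ℝ) : EReal)}

def criticalSet {n : ℕ} (f : Eucl n → EReal) (S : Set (Eucl n)) : Set (Eucl n) :=
  {x | f x ≠ ⊤ ∧ x ∈ S ∧ (0 : Eucl n) ∈ limSubdiff f x + limNormalCone S x}

def tangencyVariety {n : ℕ} (f : Eucl n → EReal) (S : Set (Eucl n)) : Set (Eucl n) :=
  {x | f x ≠ ⊤ ∧ x ∈ S ∧ ∃ μ : ℝ,
    (0 : Eucl n) ∈ limSubdiff f x + limNormalCone S x + ({μ • x} : Set (Eucl n))}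

def QCinf {n : ℕ} (f : Eucl n → EReal) (S : Set (Eucl n)) : Prop :=
  ∃ R > (0:ℝ), ∀ x : Eucl n, f x ≠ ⊤ → x ∈ S → R < ‖x‖ →
    horizonSubdiff f x ∩ (-(limNormalCone S x)) = {0}

/-! ### Infrastructure lemmas -/

lemma initP_snocP {n : ℕ} (x : Eucl n) (a : ℝ) : initP (snocP x a) = x := by
  ext i; simp [initP, snocP, Fin.snoc_castSucc]

lemma snocP_last {n : ℕ} (x : Eucl n) (a : ℝ) : snocP x a (Fin.last n) = a := by
  simp [snocP]

lemma snocP_initP {n : ℕ} (z : Eucl (n+1)) : snocP (initP z) (z (Fin.last n)) = z := by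
  ext i
  refine Fin.lastCases ?_ ?_ i
  · simp [snocP]
  · intro j; simp [snocP, initP, Fin.snoc_castSucc]

lemma snocP_sub {n : ℕ} (x y : Eucl n) (a b : ℝ) :
    snocP x a - snocP y b = snocP (x - y) (a - b) := by
  ext i
  refine Fin.lastCases ?_ ?_ i
  · simp [snocP]
  · intro j; simp [snocP, Fin.snoc_castSucc]

lemma snocP_smul {n : ℕ} (t : ℝ) (x : Eucl n) (a : ℝ) :
    t • snocP x a = snocP (t • x) (t * a) := by
  ext i
  refine Fin.lastCases ?_ ?_ i
  · simp [snocP]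
  · intro j; simp [snocP, Fin.snoc_castSucc]

lemma norm_snocP_sq {n : ℕ} (x : Eucl n) (a : ℝ) :
    ‖snocP x a‖ ^ 2 = ‖x‖ ^ 2 + a ^ 2 := by
  have h1 := EuclideanSpace.norm_eq (snocP x a)
  have h2 := EuclideanSpace.norm_eq x
  have hs : ∑ i : Fin (n+1), ‖snocP x a i‖ ^ 2 = (∑ i : Fin n, ‖x i‖ ^ 2) + a ^ 2 := by
    rw [Fin.sum_univ_castSucc]
    simp [snocP, Fin.snoc_castSucc, sq_abs]
  rw [h1, h2, Real.sq_sqrt (by positivity), hs, Real.sq_sqrt (by positivity)]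

lemma norm_le_norm_snocP {n : ℕ} (x : Eucl n) (a : ℝ) : ‖x‖ ≤ ‖snocP x a‖ := by
  have := norm_snocP_sq x a
  nlinarith [norm_nonneg x, norm_nonneg (snocP x a), sq_nonneg a]

lemma norm_snocP_le {n : ℕ} (x : Eucl n) (a : ℝ) : ‖snocP x a‖ ≤ ‖x‖ + |a| := by
  have := norm_snocP_sq x a
  nlinarith [norm_nonneg x, norm_nonneg (snocP x a), abs_nonneg a, sq_abs a]

lemma inner_snocP {n : ℕ} (x y : Eucl n) (a b : ℝ) :
    (inner ℝ (snocP x a) (snocP y b) : ℝ) = (inner ℝ x y : ℝ) + a * b := by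
  rw [PiLp.inner_apply, PiLp.inner_apply, Fin.sum_univ_castSucc]
  simp [snocP, Fin.snoc_castSucc, RCLike.inner_apply]; ring

lemma tendsto_snocP {n : ℕ} {xs : ℕ → Eucl n} {as : ℕ → ℝ} {x : Eucl n} {a : ℝ}
    (hx : Tendsto xs atTop (𝓝 x)) (ha : Tendsto as atTop (𝓝 a)) :
    Tendsto (fun k => snocP (xs k) (as k)) atTop (𝓝 (snocP x a)) := by
  rw [tendsto_iff_dist_tendsto_zero]
  have hb : ∀ k, dist (snocP (xs k) (as k)) (snocP x a) ≤ dist (xs k) x + |as k - a| := by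
    intro k
    rw [dist_eq_norm, snocP_sub]
    exact norm_snocP_le _ _
  have h0 : Tendsto (fun k => dist (xs k) x + |as k - a|) atTop (𝓝 0) := by
    have h1 : Tendsto (fun k => dist (xs k) x) atTop (𝓝 0) :=
      tendsto_iff_dist_tendsto_zero.1 hx
    have h2 : Tendsto (fun k => |as k - a|) atTop (𝓝 0) := by
      have := tendsto_iff_dist_tendsto_zero.1 ha
      simpa [Real.dist_eq] using this
    simpa using h1.add h2
  exact squeeze_zero (fun k => dist_nonneg) hb h0

lemma zero_mem_regNormalCone {n : ℕ} (S : Set (Eucl n)) (x : Eucl n) :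
    (0 : Eucl n) ∈ regNormalCone S x := by
  intro ε hε
  exact ⟨1, one_pos, fun y _ _ => by simp [inner_zero_left]; positivity⟩

lemma smul_mem_regNormalCone {n : ℕ} {S : Set (Eucl n)} {x v : Eucl n} {t : ℝ}
    (hv : v ∈ regNormalCone S x) (ht : 0 < t) : t • v ∈ regNormalCone S x := by
  intro ε hε
  obtain ⟨δ, hδ, h⟩ := hv (ε / t) (by positivity)
  refine ⟨δ, hδ, fun y hy hyx => ?_⟩
  have := h y hy hyx
  rw [real_inner_smul_left]
  calc t * (inner ℝ v (y - x) : ℝ) ≤ t * (ε / t * ‖y - x‖) := by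
        exact mul_le_mul_of_nonneg_left this ht.le
    _ = ε * ‖y - x‖ := by field_simp

lemma mem_limNormalCone_of_seq {n : ℕ} {S : Set (Eucl n)} {x v : Eucl n}
    (xs vs : ℕ → Eucl n) (hxs : ∀ k, xs k ∈ S) (hvs : ∀ k, vs k ∈ regNormalCone S (xs k))
    (hx : Tendsto xs atTop (𝓝 x)) (hv : Tendsto vs atTop (𝓝 v)) : v ∈ limNormalCone S x :=
  ⟨xs, vs, hxs, hvs, hx, hv⟩

lemma zero_mem_limNormalCone {n : ℕ} {S : Set (Eucl n)} {x : Eucl n} (hx : x ∈ S) :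
    (0 : Eucl n) ∈ limNormalCone S x :=
  ⟨fun _ => x, fun _ => 0, fun _ => hx, fun _ => zero_mem_regNormalCone S x,
    tendsto_const_nhds, tendsto_const_nhds⟩

lemma quad_mem_regNormalCone {n : ℕ} {S : Set (Eucl n)} {u₀ w : Eucl n} {C δ₀ : ℝ}
    (hδ₀ : 0 < δ₀) (hC : 0 ≤ C)
    (h : ∀ u ∈ S, ‖u - u₀‖ < δ₀ → (inner ℝ w (u - u₀) : ℝ) ≤ C * ‖u - u₀‖ ^ 2) :
    w ∈ regNormalCone S u₀ := by
  intro ε hε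
  refine ⟨min δ₀ (ε / (C + 1)), lt_min hδ₀ (by positivity), fun u hu hun => ?_⟩
  have h1 : ‖u - u₀‖ < δ₀ := lt_of_lt_of_le hun (min_le_left _ _)
  have h2 : ‖u - u₀‖ ≤ ε / (C + 1) := le_of_lt (lt_of_lt_of_le hun (min_le_right _ _))
  have := h u hu h1
  have hn : (0:ℝ) ≤ ‖u - u₀‖ := norm_nonneg _
  calc (inner ℝ w (u - u₀) : ℝ) ≤ C * ‖u - u₀‖ ^ 2 := this
    _ = C * ‖u - u₀‖ * ‖u - u₀‖ := by ring
    _ ≤ (C+1) * (ε / (C+1)) * ‖u - u₀‖ := by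
        apply mul_le_mul_of_nonneg_right _ hn
        calc C * ‖u - u₀‖ ≤ (C+1) * ‖u-u₀‖ := by nlinarith
          _ ≤ (C+1) * (ε/(C+1)) := by
            apply mul_le_mul_of_nonneg_left h2 (by positivity)
    _ = ε * ‖u - u₀‖ := by field_simp

lemma lsc_bddBelow_on_compact {X : Type*} [TopologicalSpace X] {f : X → EReal} {K : Set X}
    (hK : IsCompact K) (hbot : ∀ x, f x ≠ ⊥) (hlsc : LowerSemicontinuous f) :
    ∃ m : ℝ, ∀ x ∈ K, (m : EReal) ≤ f x := by
  have hr : ∀ x : X, ∃ r : ℝ, (r : EReal) < f x := by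
    intro x
    obtain ⟨r, _, hr2⟩ := EReal.exists_between_coe_real (bot_lt_iff_ne_bot.2 (hbot x))
    exact ⟨r, hr2⟩
  choose r hrlt using hr
  have hU : ∀ x ∈ K, f ⁻¹' Ioi ((r x : EReal)) ∈ 𝓝 x := by
    intro x _
    exact (hlsc.isOpen_preimage _).mem_nhds (hrlt x)
  obtain ⟨t, _, hcov⟩ := hK.elim_nhds_subcover (fun x => f ⁻¹' Ioi ((r x : EReal))) hU
  rcases t.eq_empty_or_nonempty with h | h
  · refine ⟨0, fun x hx => ?_⟩
    have := hcov hx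
    simp [h] at this
  · obtain ⟨x₀, hx₀, hmin⟩ := t.exists_min_image r h
    refine ⟨r x₀, fun x hx => ?_⟩
    obtain ⟨y, hy, hxy⟩ := mem_iUnion₂.1 (hcov hx)
    calc ((r x₀ : ℝ) : EReal) ≤ (r y : EReal) := by exact_mod_cast hmin y hy
      _ ≤ f x := le_of_lt hxy

lemma isClosed_realEpi {n : ℕ} {f : Eucl n → EReal} (hlsc : LowerSemicontinuous f) :
    IsClosed {p : Eucl n × ℝ | f p.1 ≤ ((p.2 : ℝ) : EReal)} := by
  have h := lowerSemicontinuous_iff_isClosed_epigraph.1 hlsc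
  have hg : Continuous (fun p : Eucl n × ℝ => ((p.1, (p.2 : EReal)) : Eucl n × EReal)) :=
    continuous_fst.prodMk (continuous_coe_real_ereal.comp continuous_snd)
  exact h.preimage hg

lemma frechet_mem_regNormalCone {n : ℕ} {f : Eucl n → EReal} {x₀ v : Eucl n} {C δ₀ : ℝ}
    (hδ₀ : 0 < δ₀) (hC : 0 ≤ C)
    (h : ∀ x : Eucl n, ‖x - x₀‖ < δ₀ →
      ((((f x₀).toReal + (inner ℝ v (x - x₀) : ℝ) - C * ‖x - x₀‖ ^ 2 : ℝ)) : EReal) ≤ f x) :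
    snocP v (-1) ∈ regNormalCone (epiSet f) (snocP x₀ (f x₀).toReal) := by
  intro ε hε
  set t₀ := (f x₀).toReal
  refine ⟨min δ₀ (ε / (C + 1)), lt_min hδ₀ (by positivity), fun y hy hyn => ?_⟩
  set x := initP y with hxdef
  set t := y (Fin.last n) with htdef
  have hy' : f x ≤ ((t : ℝ) : EReal) := hy
  have hsplit : y - snocP x₀ t₀ = snocP (x - x₀) (t - t₀) := by
    conv_lhs => rw [← snocP_initP y]
    rw [snocP_sub]
  have hnx : ‖x - x₀‖ ≤ ‖y - snocP x₀ t₀‖ := by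
    rw [hsplit]; exact norm_le_norm_snocP _ _
  have hδa : ‖x - x₀‖ < δ₀ :=
    lt_of_le_of_lt hnx (lt_of_lt_of_le hyn (min_le_left _ _))
  have hδb : ‖x - x₀‖ ≤ ε / (C + 1) :=
    le_of_lt (lt_of_le_of_lt hnx (lt_of_lt_of_le hyn (min_le_right _ _)))
  have hreal : t₀ + (inner ℝ v (x - x₀) : ℝ) - C * ‖x - x₀‖ ^ 2 ≤ t := by
    have := le_trans (h x hδa) hy'
    exact_mod_cast this
  rw [hsplit, inner_snocP]
  have hC1 : C * ‖x - x₀‖ ^ 2 ≤ ε * ‖y - snocP x₀ t₀‖ := by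
    have h1 : C * ‖x - x₀‖ ^ 2 = (C * ‖x - x₀‖) * ‖x - x₀‖ := by ring
    have h2 : C * ‖x - x₀‖ ≤ (C + 1) * (ε / (C + 1)) := by
      have : C * ‖x-x₀‖ ≤ (C+1) * ‖x-x₀‖ := by nlinarith [norm_nonneg (x - x₀)]
      exact le_trans this (mul_le_mul_of_nonneg_left hδb (by positivity))
    have h3 : (C + 1) * (ε / (C + 1)) = ε := by field_simp
    rw [h1]
    calc (C * ‖x - x₀‖) * ‖x - x₀‖ ≤ ε * ‖x - x₀‖ := by
          rw [← h3]; exact mul_le_mul_of_nonneg_right h2 (norm_nonneg _)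
      _ ≤ ε * ‖y - snocP x₀ t₀‖ := mul_le_mul_of_nonneg_left hnx hε.le
  rw [← hsplit]
  nlinarith [hreal, hC1]

lemma scalar_quartic (q A H N : ℝ) (hA : |A| ≤ N * H) (hH0 : 0 ≤ H) (hH1 : H ≤ 1)
    (hN : 0 ≤ N) :
    (q + 2*A + H^2)^2 ≤ q^2 + 4*q*A + (2*|q| + (2*N+1)^2) * H^2 := by
  have h1 : A ≤ N * H := le_trans (le_abs_self A) hA
  have h2 : -A ≤ N * H := by have := (abs_le.1 hA).1; linarith
  have h3 : A^2 ≤ (N*H)^2 := by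
    have := mul_self_le_mul_self (abs_nonneg A) hA
    nlinarith [sq_abs A]
  have hq1 : q ≤ |q| := le_abs_self q
  have hq2 : -q ≤ |q| := by have := neg_abs_le q; linarith
  nlinarith [sq_nonneg H, sq_nonneg (N*H), mul_nonneg hH0 hH0, sq_nonneg A,
    mul_le_mul_of_nonneg_right hH1 (mul_nonneg hH0 hH0),
    mul_le_mul_of_nonneg_right h1 (mul_nonneg hH0 hH0),
    mul_le_mul_of_nonneg_right hq2 (mul_nonneg hH0 hH0),
    mul_le_mul_of_nonneg_right hq1 (mul_nonneg hH0 hH0),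
    mul_le_mul_of_nonneg_right h3 (mul_nonneg hH0 hH0)]

lemma taylor_psi {n : ℕ} (lam K c : ℝ) (hlam : 0 ≤ lam) (hK : 0 ≤ K)
    (u₀ y x₀ x : Eucl n) (hh : ‖x - x₀‖ ≤ 1) :
    lam*(‖x‖^2-c)^2 + K/2*‖x-u₀‖^2 + ‖x-y‖^2 ≤
      lam*(‖x₀‖^2-c)^2 + K/2*‖x₀-u₀‖^2 + ‖x₀-y‖^2
      + (inner ℝ ((4*lam*(‖x₀‖^2-c)) • x₀ + K • (x₀ - u₀) + (2:ℝ) • (x₀-y)) (x - x₀) : ℝ)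
      + (lam*(2*|‖x₀‖^2-c| + (2*‖x₀‖+1)^2) + K/2 + 1)*‖x-x₀‖^2 := by
  set h := x - x₀ with hdef
  have hx : x = x₀ + h := by rw [hdef]; abel
  have e1 : ‖x‖^2 = ‖x₀‖^2 + 2*(inner ℝ x₀ h : ℝ) + ‖h‖^2 := by
    rw [hx]; exact norm_add_sq_real x₀ h
  have e2 : ‖x-u₀‖^2 = ‖x₀-u₀‖^2 + 2*(inner ℝ (x₀-u₀) h : ℝ) + ‖h‖^2 := by
    have : x - u₀ = (x₀ - u₀) + h := by rw [hx]; abel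
    rw [this]; exact norm_add_sq_real _ _
  have e3 : ‖x-y‖^2 = ‖x₀-y‖^2 + 2*(inner ℝ (x₀-y) h : ℝ) + ‖h‖^2 := by
    have : x - y = (x₀ - y) + h := by rw [hx]; abel
    rw [this]; exact norm_add_sq_real _ _
  have einner : (inner ℝ ((4*lam*(‖x₀‖^2-c)) • x₀ + K • (x₀ - u₀) + (2:ℝ) • (x₀-y)) h : ℝ)
      = 4*lam*(‖x₀‖^2-c)*(inner ℝ x₀ h : ℝ) + K*(inner ℝ (x₀-u₀) h : ℝ)
        + 2*(inner ℝ (x₀-y) h : ℝ) := by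
    rw [inner_add_left, inner_add_left, real_inner_smul_left, real_inner_smul_left,
      real_inner_smul_left]
  rw [e1, e2, e3, einner]
  set A := (inner ℝ x₀ h : ℝ)
  set H := ‖h‖
  set N := ‖x₀‖
  set q := ‖x₀‖^2 - c with hq
  have hCS : |A| ≤ N * H := abs_real_inner_le_norm x₀ h
  have hH0 : (0:ℝ) ≤ H := norm_nonneg _
  have key := scalar_quartic q A H N hCS hH0 hh (norm_nonneg _)
  have hquart : lam * (q + 2*A + H^2)^2
      ≤ lam * (q^2 + 4*q*A + (2*|q| + (2*N+1)^2) * H^2) :=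
    mul_le_mul_of_nonneg_left key hlam
  have hexp : (N^2 + 2*A + H^2 - c) = q + 2*A + H^2 := by rw [hq]; ring
  rw [hexp]
  have hquart2 : lam * (q + 2*A + H^2)^2
      ≤ lam*q^2 + 4*lam*q*A + lam*(2*|q| + (2*N+1)^2) * H^2 := by
    calc lam * (q + 2*A + H^2)^2 ≤ lam * (q^2 + 4*q*A + (2*|q| + (2*N+1)^2) * H^2) := hquart
      _ = lam*q^2 + 4*lam*q*A + lam*(2*|q| + (2*N+1)^2) * H^2 := by ring
  clear_value A H N q h
  linarith [hquart2]

lemma tendsto_comp_strictMono {α : Type*} {g : ℕ → α} {l : Filter α}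
    (h : Tendsto g atTop l) {π : ℕ → ℕ} (hπ : StrictMono π) : Tendsto (fun j => g (π j)) atTop l :=
  h.comp hπ.tendsto_atTop

set_option maxHeartbeats 2000000 in
lemma key_lemma {n : ℕ} (f : Eucl n → EReal) (S : Set (Eucl n))
    (hlsc : LowerSemicontinuous f) (hbot : ∀ x, f x ≠ ⊥) (hScl : IsClosed S)
    (lam c : ℝ) (hlam : 0 ≤ lam) {y : Eucl n} (hyS : y ∈ S) (hyf : f y ≠ ⊤)
    {ρ : ℝ} (hρ : 0 < ρ)
    (hmin : ∀ x ∈ S, ‖x - y‖ < ρ →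
      (((f y).toReal + lam*(‖y‖^2-c)^2 - lam*(‖x‖^2-c)^2 : ℝ) : EReal) ≤ f x) :
    (∃ v ∈ limSubdiff f y, ∃ w ∈ limNormalCone S y,
        v + w + (4*lam*(‖y‖^2-c)) • y = 0) ∨
    (∃ z : Eucl n, z ≠ 0 ∧ z ∈ horizonSubdiff f y ∩ (-(limNormalCone S y))) := by
  obtain ⟨m, hm⟩ := lsc_bddBelow_on_compact (isCompact_closedBall y (ρ/2)) hbot hlsc
  have hφ0 : ∀ x : Eucl n, 0 ≤ lam*(‖x‖^2-c)^2 := fun x => mul_nonneg hlam (sq_nonneg _)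
  have hφcont : Continuous (fun x : Eucl n => lam*(‖x‖^2-c)^2) :=
    continuous_const.mul (((continuous_norm.pow 2).sub continuous_const).pow 2)
  set fyR := (f y).toReal with hfyR
  have hfy : f y = ((fyR : ℝ) : EReal) := (EReal.coe_toReal hyf (hbot y)).symm
  set c₀ : ℝ := fyR + lam*(‖y‖^2-c)^2 with hc₀
  set T₀ : ℝ := c₀ + 1 with hT₀
  have hyB : y ∈ Metric.closedBall y (ρ/2) := Metric.mem_closedBall_self (by positivity)
  have hmfy : m ≤ fyR := by
    have := hm y hyB; rw [hfy] at this; exact_mod_cast this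
  have hc₀m : m ≤ c₀ := by have := hφ0 y; rw [hc₀]; linarith
  -- the constraint set
  set E : Set (Eucl n × Eucl n × ℝ) :=
    {p | p.1 ∈ Metric.closedBall y (ρ/2) ∧ (p.2.1 ∈ S ∧ p.2.1 ∈ Metric.closedBall y (ρ/2))
      ∧ f p.1 ≤ ((p.2.2 : ℝ) : EReal) ∧ p.2.2 ∈ Icc m T₀} with hE
  have hEclosed : IsClosed E := by
    have h1 : IsClosed ((fun p : Eucl n × Eucl n × ℝ => p.1) ⁻¹' Metric.closedBall y (ρ/2)) :=
      Metric.isClosed_closedBall.preimage continuous_fst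
    have h2 : IsClosed ((fun p : Eucl n × Eucl n × ℝ => p.2.1) ⁻¹' S) :=
      hScl.preimage (continuous_fst.comp continuous_snd)
    have h3 : IsClosed ((fun p : Eucl n × Eucl n × ℝ => p.2.1) ⁻¹' Metric.closedBall y (ρ/2)) :=
      Metric.isClosed_closedBall.preimage (continuous_fst.comp continuous_snd)
    have h4 : IsClosed ((fun p : Eucl n × Eucl n × ℝ => ((p.1, p.2.2) : Eucl n × ℝ)) ⁻¹'
        {q : Eucl n × ℝ | f q.1 ≤ ((q.2:ℝ):EReal)}) :=
      (isClosed_realEpi hlsc).preimage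
        (continuous_fst.prodMk (continuous_snd.comp continuous_snd))
    have h5 : IsClosed ((fun p : Eucl n × Eucl n × ℝ => p.2.2) ⁻¹' Icc m T₀) :=
      isClosed_Icc.preimage (continuous_snd.comp continuous_snd)
    exact h1.inter (h2.inter h3 |>.inter (h4.inter h5))
  have hEcpt : IsCompact E := by
    exact ((isCompact_closedBall y (ρ/2)).prod
        ((isCompact_closedBall y (ρ/2)).prod isCompact_Icc)).of_isClosed_subset
      hEclosed (fun p hp => ⟨hp.1, hp.2.1.2, hp.2.2.2⟩)
  have hbase : ((y, y, fyR) : Eucl n × Eucl n × ℝ) ∈ E := by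
    refine ⟨hyB, ⟨hyS, hyB⟩, ?_, ⟨hmfy, by rw [hT₀]; linarith [hφ0 y]⟩⟩
    rw [hfy]
  set G : ℕ → Eucl n × Eucl n × ℝ → ℝ := fun k p =>
    p.2.2 + lam*(‖p.1‖^2-c)^2 + ((k:ℝ)+1)/2*‖p.1-p.2.1‖^2 + ‖p.1-y‖^2 with hG
  have hGcont : ∀ k, Continuous (G k) := by
    intro k
    have c1 : Continuous (fun p : Eucl n × Eucl n × ℝ => p.2.2) :=
      continuous_snd.comp continuous_snd
    have c2 : Continuous (fun p : Eucl n × Eucl n × ℝ => lam*(‖p.1‖^2-c)^2) :=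
      hφcont.comp continuous_fst
    have c3 : Continuous (fun p : Eucl n × Eucl n × ℝ => ((k:ℝ)+1)/2*‖p.1-p.2.1‖^2) :=
      continuous_const.mul
        (((continuous_fst.sub (continuous_fst.comp continuous_snd)).norm).pow 2)
    have c4 : Continuous (fun p : Eucl n × Eucl n × ℝ => ‖p.1-y‖^2) :=
      ((continuous_fst.sub continuous_const).norm).pow 2
    exact ((c1.add c2).add c3).add c4
  have hmin_ex : ∀ k, ∃ p ∈ E, IsMinOn (G k) E p :=
    fun k => hEcpt.exists_isMinOn ⟨_, hbase⟩ (hGcont k).continuousOn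
  choose p hpE hpm using hmin_ex
  set X : ℕ → Eucl n := fun k => (p k).1 with hX
  set U : ℕ → Eucl n := fun k => (p k).2.1 with hU
  set T : ℕ → ℝ := fun k => (p k).2.2 with hT
  have hXB : ∀ k, X k ∈ Metric.closedBall y (ρ/2) := fun k => (hpE k).1
  have hUS : ∀ k, U k ∈ S := fun k => (hpE k).2.1.1
  have hUB : ∀ k, U k ∈ Metric.closedBall y (ρ/2) := fun k => (hpE k).2.1.2
  have hfXT : ∀ k, f (X k) ≤ ((T k : ℝ) : EReal) := fun k => (hpE k).2.2.1
  have hTm : ∀ k, m ≤ T k := fun k => (hpE k).2.2.2.1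
  have hTT₀ : ∀ k, T k ≤ T₀ := fun k => (hpE k).2.2.2.2
  have hG0 : ∀ k, G k (p k) ≤ c₀ := by
    intro k
    have := isMinOn_iff.mp (hpm k) _ hbase
    simpa [hG, hc₀] using this
  -- identification of the last coordinate
  have hfXtop : ∀ k, f (X k) ≠ ⊤ :=
    fun k => (lt_of_le_of_lt (hfXT k) (EReal.coe_lt_top _)).ne
  have hfXco : ∀ k, f (X k) = (((f (X k)).toReal : ℝ) : EReal) :=
    fun k => (EReal.coe_toReal (hfXtop k) (hbot _)).symm
  have hTeq : ∀ k, T k = (f (X k)).toReal := by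
    intro k
    have hs1 : (f (X k)).toReal ≤ T k := by
      have := hfXT k; rw [hfXco k] at this; exact_mod_cast this
    have hsm : m ≤ (f (X k)).toReal := by
      have := hm (X k) (hXB k); rw [hfXco k] at this; exact_mod_cast this
    have hq : ((X k, U k, (f (X k)).toReal) : Eucl n × Eucl n × ℝ) ∈ E :=
      ⟨hXB k, ⟨hUS k, hUB k⟩, le_of_eq (hfXco k), ⟨hsm, hs1.trans (hTT₀ k)⟩⟩
    have hineq := isMinOn_iff.mp (hpm k) _ hq
    simp only [hG] at hineq
    have : T k ≤ (f (X k)).toReal := by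
      simp only [hX, hU, hT] at hineq ⊢
      linarith [hineq]
    linarith
  have hTc₀ : ∀ k, T k ≤ c₀ := by
    intro k
    have := hG0 k
    simp only [hG] at this
    have h1 : 0 ≤ lam*(‖X k‖^2-c)^2 := hφ0 _
    have h2 : 0 ≤ ((k:ℝ)+1)/2*‖X k - U k‖^2 := by positivity
    have h3 : 0 ≤ ‖X k - y‖^2 := by positivity
    simp only [hX, hU, hT] at this ⊢
    linarith
  have hKbd : ∀ k : ℕ, ((k:ℝ)+1)/2*‖X k - U k‖^2 ≤ c₀ - m := by
    intro k
    have := hG0 k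
    simp only [hG] at this
    have h1 : 0 ≤ lam*(‖X k‖^2-c)^2 := hφ0 _
    have h3 : 0 ≤ ‖X k - y‖^2 := by positivity
    have h4 := hTm k
    simp only [hX, hU, hT] at this h4 ⊢
    linarith
  -- x_k - u_k → 0
  have hxun : Tendsto (fun k => ‖X k - U k‖) atTop (𝓝 0) := by
    have hsq : ∀ k, ‖X k - U k‖^2 ≤ (2*(c₀ - m))/((k:ℝ)+1) := by
      intro k
      have hk1 : (0:ℝ) < (k:ℝ)+1 := by positivity
      rw [le_div_iff₀ hk1]
      have := hKbd k
      nlinarith [this]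
    have hd : Tendsto (fun k : ℕ => (2*(c₀-m))/((k:ℝ)+1)) atTop (𝓝 0) :=
      Tendsto.div_atTop tendsto_const_nhds
        (tendsto_atTop_add_const_right _ 1 tendsto_natCast_atTop_atTop)
    have hsq0 : Tendsto (fun k => ‖X k - U k‖^2) atTop (𝓝 0) :=
      squeeze_zero (fun k => by positivity) hsq hd
    have := hsq0.sqrt
    rw [Real.sqrt_zero] at this
    convert this using 2 with k
    rw [Real.sqrt_sq (norm_nonneg _)]
  have hxu0 : Tendsto (fun k => X k - U k) atTop (𝓝 0) :=
    tendsto_zero_iff_norm_tendsto_zero.2 hxun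
  -- subsequence extraction
  obtain ⟨xb, hxbB, σ1, hσ1, hxc⟩ :=
    (isCompact_closedBall y (ρ/2)).tendsto_subseq (x := X) hXB
  obtain ⟨tb, htbI, σ2, hσ2, htc⟩ :=
    (isCompact_Icc (a := m) (b := T₀)).tendsto_subseq
      (x := fun j => T (σ1 j)) (fun j => (hpE (σ1 j)).2.2.2)
  set τ : ℕ → ℕ := fun j => σ1 (σ2 j) with hτdef
  have hτ : StrictMono τ := hσ1.comp hσ2
  have hxcτ : Tendsto (fun j => X (τ j)) atTop (𝓝 xb) := by
    have := tendsto_comp_strictMono hxc hσ2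
    simpa [Function.comp] using this
  have htcτ : Tendsto (fun j => T (τ j)) atTop (𝓝 tb) := by
    simpa [Function.comp_def] using htc
  have hucτ : Tendsto (fun j => U (τ j)) atTop (𝓝 xb) := by
    have h1 := tendsto_comp_strictMono hxu0 hτ
    have := hxcτ.sub h1
    simpa using this
  have hxbS : xb ∈ S :=
    hScl.mem_of_tendsto hucτ (Eventually.of_forall fun j => hUS (τ j))
  -- lsc inequality for the limit
  have hfxb : f xb ≤ ((tb : ℝ) : EReal) := by
    by_contra hcon
    obtain ⟨cc, hcc1, hcc2⟩ := exists_between (not_le.1 hcon)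
    have hev : ∀ᶠ j in atTop, cc < f (X (τ j)) := hxcτ.eventually (hlsc xb cc hcc2)
    have hev2 : ∀ᶠ j in atTop, cc ≤ ((T (τ j) : ℝ) : EReal) := by
      filter_upwards [hev] with j hj
      exact le_trans hj.le (hfXT (τ j))
    have hcoe : Tendsto (fun j => ((T (τ j) : ℝ) : EReal)) atTop (𝓝 ((tb:ℝ):EReal)) :=
      (continuous_coe_real_ereal.tendsto tb).comp htcτ
    exact absurd (ge_of_tendsto hcoe hev2) (not_le.2 hcc1)
  have hxbρ : ‖xb - y‖ ≤ ρ/2 := by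
    have := hxbB; rwa [Metric.mem_closedBall, dist_eq_norm] at this
  have hminxb := hmin xb hxbS (lt_of_le_of_lt hxbρ (by linarith))
  have hrxb : fyR + lam*(‖y‖^2-c)^2 - lam*(‖xb‖^2-c)^2 ≤ tb := by
    have := le_trans hminxb hfxb
    exact_mod_cast this
  have hlim : tb + lam*(‖xb‖^2-c)^2 + ‖xb - y‖^2 ≤ c₀ := by
    have hjle : ∀ j, T (τ j) + lam*(‖X (τ j)‖^2-c)^2 + ‖X (τ j) - y‖^2 ≤ c₀ := by
      intro j
      have := hG0 (τ j)
      simp only [hG] at this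
      have h2 : 0 ≤ ((τ j:ℝ)+1)/2*‖X (τ j) - U (τ j)‖^2 := by positivity
      simp only [hX, hU, hT] at this ⊢
      linarith
    have hconv : Tendsto (fun j => T (τ j) + lam*(‖X (τ j)‖^2-c)^2 + ‖X (τ j) - y‖^2)
        atTop (𝓝 (tb + lam*(‖xb‖^2-c)^2 + ‖xb - y‖^2)) := by
      have h5 : Tendsto (fun j => ‖X (τ j) - y‖^2) atTop (𝓝 (‖xb - y‖^2)) :=
        ((hxcτ.sub tendsto_const_nhds).norm).pow 2
      have h6 : Tendsto (fun j => lam*(‖X (τ j)‖^2-c)^2) atTop (𝓝 (lam*(‖xb‖^2-c)^2)) :=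
        (hφcont.tendsto xb).comp hxcτ
      exact (htcτ.add h6).add h5
    exact le_of_tendsto hconv (Eventually.of_forall hjle)
  have hxby : xb = y := by
    have h2 : ‖xb - y‖^2 ≤ 0 := by rw [hc₀] at hlim; linarith
    have h3 : ‖xb - y‖ = 0 := by nlinarith [norm_nonneg (xb - y), sq_nonneg (‖xb - y‖)]
    have := norm_eq_zero.1 h3
    exact sub_eq_zero.1 this
  rw [hxby] at hxcτ hucτ hrxb hlim
  have htb : tb = fyR := by
    have hyy : ‖y - y‖^2 = 0 := by simp
    rw [hc₀] at hlim
    linarith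
  rw [htb] at htcτ
  -- eventual interiority
  obtain ⟨J1, hJ1⟩ := Metric.tendsto_atTop.mp hxcτ (ρ/2) (by linarith)
  obtain ⟨J2, hJ2⟩ := Metric.tendsto_atTop.mp hucτ (ρ/2) (by linarith)
  set J := max J1 J2 with hJdef
  have hJ1J : J1 ≤ J := le_max_left _ _
  have hJ2J : J2 ≤ J := le_max_right _ _
  set θ : ℕ → ℕ := fun j => τ (j + J) with hθdef
  have hθ : StrictMono θ := hτ.comp (fun a b h => by omega)
  have hXθint : ∀ j, ‖X (θ j) - y‖ < ρ/2 := by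
    intro j
    have := hJ1 (j + J) (by omega)
    rwa [dist_eq_norm] at this
  have hUθint : ∀ j, ‖U (θ j) - y‖ < ρ/2 := by
    intro j
    have := hJ2 (j + J) (by omega)
    rwa [dist_eq_norm] at this
  have hXθ : Tendsto (fun j => X (θ j)) atTop (𝓝 y) :=
    hxcτ.comp (tendsto_add_atTop_nat J)
  have hUθ : Tendsto (fun j => U (θ j)) atTop (𝓝 y) :=
    hucτ.comp (tendsto_add_atTop_nat J)
  have hTθ : Tendsto (fun j => T (θ j)) atTop (𝓝 fyR) :=
    htcτ.comp (tendsto_add_atTop_nat J)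
  -- the dual sequences
  set W : ℕ → Eucl n := fun j => ((θ j : ℝ)+1) • (X (θ j) - U (θ j)) with hW
  set V : ℕ → Eucl n := fun j =>
    -((4*lam*(‖X (θ j)‖^2-c)) • X (θ j) + W j + (2:ℝ) • (X (θ j) - y)) with hV
  -- W j is a regular normal to S at U (θ j)
  have hWreg : ∀ j, W j ∈ regNormalCone S (U (θ j)) := by
    intro j
    set k := θ j with hk
    have hkpos : (0:ℝ) < (k:ℝ)+1 :=
      add_pos_of_nonneg_of_pos (Nat.cast_nonneg k) one_pos
    have hδpos : (0:ℝ) < ρ/2 - ‖U k - y‖ := by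
      have := hUθint j; rw [← hk] at this; linarith
    have hCpos : (0:ℝ) ≤ ((k:ℝ)+1)/2 := div_nonneg hkpos.le (by norm_num)
    refine quad_mem_regNormalCone hδpos hCpos ?_
    intro u' hu'S hu'n
    have hu'B : u' ∈ Metric.closedBall y (ρ/2) := by
      rw [Metric.mem_closedBall, dist_eq_norm]
      have h1 : u' - y = (u' - U k) + (U k - y) := by abel
      calc ‖u' - y‖ = ‖(u' - U k) + (U k - y)‖ := by rw [← h1]
        _ ≤ ‖u' - U k‖ + ‖U k - y‖ := norm_add_le _ _
        _ ≤ ρ/2 := by linarith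
    have hq : ((X k, u', T k) : Eucl n × Eucl n × ℝ) ∈ E :=
      ⟨hXB k, ⟨hu'S, hu'B⟩, hfXT k, ⟨hTm k, hTT₀ k⟩⟩
    have hineq := isMinOn_iff.mp (hpm k) _ hq
    simp only [hG] at hineq
    simp only [hX, hU, hT] at hineq
    have hnormle : ‖(p k).1 - (p k).2.1‖^2 ≤ ‖(p k).1 - u'‖^2 := by
      nlinarith [hineq]
    have hexpand : ‖(p k).1 - u'‖^2
        = ‖(p k).1 - (p k).2.1‖^2 - 2*(inner ℝ ((p k).1 - (p k).2.1) (u' - (p k).2.1) : ℝ)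
          + ‖u' - (p k).2.1‖^2 := by
      have h1 : (p k).1 - u' = ((p k).1 - (p k).2.1) - (u' - (p k).2.1) := by abel
      rw [h1, norm_sub_sq_real]
    simp only [hW, ← hk, hX, hU, hT]
    rw [real_inner_smul_left]
    nlinarith [hnormle, hexpand]
  -- V j gives a regular normal to the epigraph
  have hVreg : ∀ j, snocP (V j) (-1)
      ∈ regNormalCone (epiSet f) (snocP (X (θ j)) ((f (X (θ j))).toReal)) := by
    intro j
    set k := θ j with hk
    have hkpos : (0:ℝ) < (k:ℝ)+1 :=
      add_pos_of_nonneg_of_pos (Nat.cast_nonneg k) one_pos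
    set Ck : ℝ := lam*(2*|‖X k‖^2-c| + (2*‖X k‖+1)^2) + ((k:ℝ)+1)/2 + 1 with hCk
    have hCk0 : 0 ≤ Ck := by
      rw [hCk]
      have h1 : 0 ≤ lam*(2*|‖X k‖^2-c| + (2*‖X k‖+1)^2) :=
        mul_nonneg hlam (by positivity)
      have h2 : (0:ℝ) ≤ ((k:ℝ)+1)/2 := div_nonneg hkpos.le (by norm_num)
      linarith
    have hδpos : 0 < min (min (ρ/2 - ‖X k - y‖) 1) (1/(‖V j‖+1)) := by
      have := hXθint j; rw [← hk] at this
      refine lt_min (lt_min (by linarith) one_pos) (by positivity)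
    apply frechet_mem_regNormalCone hδpos hCk0
    intro x' hx'δ
    have hδ1 : ‖x' - X k‖ < ρ/2 - ‖X k - y‖ :=
      lt_of_lt_of_le hx'δ ((min_le_left _ _).trans (min_le_left _ _))
    have hδ2 : ‖x' - X k‖ < 1 :=
      lt_of_lt_of_le hx'δ ((min_le_left _ _).trans (min_le_right _ _))
    have hδ3 : ‖x' - X k‖ ≤ 1/(‖V j‖+1) := (lt_of_lt_of_le hx'δ (min_le_right _ _)).le
    rw [← hTeq k]
    by_cases hcase : f x' ≤ ((T₀ : ℝ) : EReal)
    · -- compare with a competitor point in E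
      have hx'B : x' ∈ Metric.closedBall y (ρ/2) := by
        rw [Metric.mem_closedBall, dist_eq_norm]
        have h1 : x' - y = (x' - X k) + (X k - y) := by abel
        calc ‖x' - y‖ = ‖(x' - X k) + (X k - y)‖ := by rw [← h1]
          _ ≤ ‖x' - X k‖ + ‖X k - y‖ := norm_add_le _ _
          _ ≤ ρ/2 := by linarith
      have hx'top : f x' ≠ ⊤ := (lt_of_le_of_lt hcase (EReal.coe_lt_top _)).ne
      have hx'co : f x' = (((f x').toReal : ℝ) : EReal) :=
        (EReal.coe_toReal hx'top (hbot _)).symm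
      have hs'm : m ≤ (f x').toReal := by
        have := hm x' hx'B; rw [hx'co] at this; exact_mod_cast this
      have hs'T : (f x').toReal ≤ T₀ := by
        rw [hx'co] at hcase; exact_mod_cast hcase
      have hq : ((x', U k, (f x').toReal) : Eucl n × Eucl n × ℝ) ∈ E :=
        ⟨hx'B, ⟨hUS k, hUB k⟩, le_of_eq hx'co, ⟨hs'm, hs'T⟩⟩
      have hineq := isMinOn_iff.mp (hpm k) _ hq
      simp only [hG] at hineq
      have htay := taylor_psi lam ((k:ℝ)+1) c hlam hkpos.le (U k) y (X k) x' hδ2.le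
      have hinner : (inner ℝ ((4*lam*(‖X k‖^2-c)) • X k + ((k:ℝ)+1) • (X k - U k)
            + (2:ℝ) • (X k - y)) (x' - X k) : ℝ)
          = -(inner ℝ (V j) (x' - X k) : ℝ) := by
        rw [hV]
        simp only [← hk, hW]
        rw [inner_neg_left]
        ring_nf
      rw [hx'co]
      rw [EReal.coe_le_coe_iff]
      rw [hinner] at htay
      simp only [hV, hW, ← hk, hX, hU, hT, hCk] at htay hineq ⊢
      linarith [htay, hineq]
    · -- the value of f is huge there, trivial
      have hhuge : ((T₀ : ℝ) : EReal) < f x' := not_le.1 hcase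
      refine le_trans ?_ hhuge.le
      rw [EReal.coe_le_coe_iff]
      have hip : (inner ℝ (V j) (x' - X k) : ℝ) ≤ ‖V j‖ * ‖x' - X k‖ :=
        real_inner_le_norm _ _
      have hb1 : ‖V j‖ * ‖x' - X k‖ ≤ ‖V j‖ * (1/(‖V j‖+1)) :=
        mul_le_mul_of_nonneg_left hδ3 (norm_nonneg _)
      have hb2 : ‖V j‖ * (1/(‖V j‖+1)) ≤ 1 := by
        rw [mul_one_div, div_le_one (by positivity)]
        linarith
      have hb3 : 0 ≤ Ck * ‖x' - X k‖^2 := mul_nonneg hCk0 (by positivity)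
      have hb4 : T k ≤ c₀ := hTc₀ k
      rw [hT₀]
      linarith
  -- limits of V + W
  have hgradcont : Continuous (fun z : Eucl n => (4*lam*(‖z‖^2-c)) • z) :=
    (continuous_const.mul ((continuous_norm.pow 2).sub continuous_const)).smul continuous_id
  have hVWsum : ∀ j, V j + W j
      = -((4*lam*(‖X (θ j)‖^2-c)) • X (θ j) + (2:ℝ) • (X (θ j) - y)) := by
    intro j; simp only [hV]; abel
  have hVW : Tendsto (fun j => V j + W j) atTop (𝓝 (-((4*lam*(‖y‖^2-c)) • y))) := by
    have h1 : Tendsto (fun j => (4*lam*(‖X (θ j)‖^2-c)) • X (θ j)) atTop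
        (𝓝 ((4*lam*(‖y‖^2-c)) • y)) := (hgradcont.tendsto y).comp hXθ
    have h2 : Tendsto (fun j => (2:ℝ) • (X (θ j) - y)) atTop
        (𝓝 ((2:ℝ) • ((y:Eucl n) - y))) := (hXθ.sub tendsto_const_nhds).const_smul (2:ℝ)
    have h3 := (h1.add h2).neg
    simp only [sub_self, smul_zero, add_zero] at h3
    exact h3.congr (fun j => (hVWsum j).symm)
  have hepimem : ∀ j, snocP (X (θ j)) (T (θ j)) ∈ epiSet f := by
    intro j
    show f (initP _) ≤ _
    rw [initP_snocP, snocP_last]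
    exact hfXT (θ j)
  have hepitend : Tendsto (fun j => snocP (X (θ j)) (T (θ j))) atTop (𝓝 (snocP y fyR)) :=
    tendsto_snocP hXθ hTθ
  by_cases hWboul : ∃ Cw : ℝ, ∃ᶠ j in atTop, ‖W j‖ ≤ Cw
  · left
    obtain ⟨Cw, hCw⟩ := hWboul
    obtain ⟨π1, hπ1, hπ1P⟩ := Filter.extraction_of_frequently_atTop hCw
    have hmemb : ∀ i, W (π1 i) ∈ Metric.closedBall (0 : Eucl n) Cw := fun i =>
      mem_closedBall_zero_iff.2 (hπ1P i)
    obtain ⟨wb, _, π2, hπ2, hwc⟩ :=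
      (isCompact_closedBall (0:Eucl n) Cw).tendsto_subseq hmemb
    have hηm : StrictMono (fun i => π1 (π2 i)) := hπ1.comp hπ2
    have hWη : Tendsto (fun i => W (π1 (π2 i))) atTop (𝓝 wb) := by
      simpa [Function.comp_def] using hwc
    have hVWη : Tendsto (fun i => V (π1 (π2 i)) + W (π1 (π2 i))) atTop
        (𝓝 (-((4*lam*(‖y‖^2-c)) • y))) := tendsto_comp_strictMono hVW hηm
    have hVη : Tendsto (fun i => V (π1 (π2 i))) atTop
        (𝓝 (-((4*lam*(‖y‖^2-c)) • y) - wb)) := by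
      have := hVWη.sub hWη
      simpa using this
    refine ⟨-((4*lam*(‖y‖^2-c)) • y) - wb, ?_, wb, ?_, by abel⟩
    · simp only [limSubdiff, Set.mem_setOf_eq, ← hfyR]
      refine mem_limNormalCone_of_seq (fun i => snocP (X (θ (π1 (π2 i)))) (T (θ (π1 (π2 i)))))
        (fun i => snocP (V (π1 (π2 i))) (-1)) (fun i => hepimem (π1 (π2 i))) ?_ ?_ ?_
      · intro i
        have := hVreg (π1 (π2 i))
        rwa [← hTeq (θ (π1 (π2 i)))] at this
      · exact tendsto_comp_strictMono hepitend hηm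
      · exact tendsto_snocP hVη tendsto_const_nhds
    · exact mem_limNormalCone_of_seq (fun i => U (θ (π1 (π2 i)))) (fun i => W (π1 (π2 i)))
        (fun i => hUS (θ (π1 (π2 i)))) (fun i => hWreg (π1 (π2 i)))
        (tendsto_comp_strictMono hUθ hηm) hWη
  · right
    have hWa : Tendsto (fun j => ‖W j‖) atTop atTop := by
      rw [tendsto_atTop]
      intro b
      push_neg at hWboul
      have := hWboul b
      filter_upwards [this] with j hj
      exact hj.le
    obtain ⟨J2, hJ2⟩ := Filter.eventually_atTop.mp (hWa.eventually_ge_atTop 1)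
    have hWpos : ∀ i : ℕ, (0:ℝ) < ‖W (i + J2)‖ :=
      fun i => lt_of_lt_of_le one_pos (hJ2 _ (by omega))
    set s : ℕ → ℝ := fun i => (‖W (i + J2)‖)⁻¹ with hsdef
    have hspos : ∀ i, 0 < s i := fun i => inv_pos.2 (hWpos i)
    have hsphere : ∀ i, s i • W (i + J2) ∈ Metric.sphere (0 : Eucl n) 1 := by
      intro i
      rw [mem_sphere_zero_iff_norm, norm_smul, Real.norm_eq_abs, abs_of_pos (hspos i)]
      exact inv_mul_cancel₀ (ne_of_gt (hWpos i))
    obtain ⟨wb, hwbS, π, hπ, hwc⟩ := (isCompact_sphere (0:Eucl n) 1).tendsto_subseq hsphere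
    have hwb1 : ‖wb‖ = 1 := mem_sphere_zero_iff_norm.1 hwbS
    have hcompf : Tendsto (fun i => π i + J2) atTop atTop :=
      (tendsto_add_atTop_nat J2).comp hπ.tendsto_atTop
    have hst : Tendsto (fun i => s (π i)) atTop (𝓝 0) := by
      have h1 : Tendsto (fun i => ‖W (π i + J2)‖) atTop atTop := hWa.comp hcompf
      exact h1.inv_tendsto_atTop
    have hwcπ : Tendsto (fun i => s (π i) • W (π i + J2)) atTop (𝓝 wb) := by
      simpa [Function.comp_def] using hwc
    have hwmem : wb ∈ limNormalCone S y := by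
      refine mem_limNormalCone_of_seq (fun i => U (θ (π i + J2)))
        (fun i => s (π i) • W (π i + J2)) (fun i => hUS _)
        (fun i => smul_mem_regNormalCone (hWreg _) (hspos (π i))) ?_ hwcπ
      have := hUθ.comp hcompf
      simpa [Function.comp_def] using this
    have hVξ : Tendsto (fun i => s (π i) • V (π i + J2)) atTop (𝓝 (-wb)) := by
      have h1 : ∀ i, s (π i) • V (π i + J2)
          = s (π i) • (V (π i + J2) + W (π i + J2)) - s (π i) • W (π i + J2) := by
        intro i; rw [smul_add]; abel
      have h2 : Tendsto (fun i => s (π i) • (V (π i + J2) + W (π i + J2))) atTop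
          (𝓝 ((0:ℝ) • (-((4*lam*(‖y‖^2-c)) • y)))) :=
        hst.smul (hVW.comp hcompf)
      rw [zero_smul] at h2
      have h3 := h2.sub hwcπ
      rw [zero_sub] at h3
      exact h3.congr (fun i => (h1 i).symm)
    have hhor : snocP (-wb) 0 ∈ limNormalCone (epiSet f) (snocP y (f y).toReal) := by
      rw [← hfyR]
      refine mem_limNormalCone_of_seq (fun i => snocP (X (θ (π i + J2))) (T (θ (π i + J2))))
        (fun i => snocP (s (π i) • V (π i + J2)) (-(s (π i)))) (fun i => hepimem _) ?_ ?_ ?_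
      · intro i
        have h0 := hVreg (π i + J2)
        rw [← hTeq (θ (π i + J2))] at h0
        have h1 := smul_mem_regNormalCone h0 (hspos (π i))
        rwa [snocP_smul, mul_neg_one] at h1
      · exact tendsto_snocP (by simpa [Function.comp_def] using hXθ.comp hcompf)
          (by simpa [Function.comp_def] using hTθ.comp hcompf)
      · exact tendsto_snocP hVξ (by simpa using hst.neg)
    refine ⟨-wb, ?_, ?_, ?_⟩
    · intro h0
      have : wb = 0 := neg_eq_zero.mp h0
      rw [this] at hwb1
      simp at hwb1
    · exact hhor
    · rw [Set.mem_neg, neg_neg]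
      exact hwmem

theorem stmt13' {n : ℕ} (f : Eucl n → EReal) (S : Set (Eucl n))
    (hlsc : LowerSemicontinuous f) (hbot : ∀ x, f x ≠ ⊥)
    (hScl : IsClosed S)
    (hne : ({x | f x ≠ ⊤} ∩ S).Nonempty)
    (hub : ∀ M : ℝ, ∃ x ∈ {x | f x ≠ ⊤} ∩ S, M < ‖x‖)
    (hqc : ∃ R > (0:ℝ), ∀ x : Eucl n, f x ≠ ⊤ → x ∈ S → R < ‖x‖ →
      horizonSubdiff f x ∩ (-(limNormalCone S x)) = {0}) :
    (∀ M : ℝ, ∃ x ∈ {x | f x ≠ ⊤ ∧ x ∈ S ∧ ∃ μ : ℝ,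
      (0 : Eucl n) ∈ limSubdiff f x + limNormalCone S x + ({μ • x} : Set (Eucl n))}, M < ‖x‖) := by
  obtain ⟨R₀, hR₀pos, hR₀⟩ := hqc
  intro M
  set r₁ : ℝ := max (max R₀ M) 1 with hr₁
  have hr₁M : M ≤ r₁ := le_trans (le_max_right R₀ M) (le_max_left _ _)
  have hr₁R : R₀ ≤ r₁ := le_trans (le_max_left R₀ M) (le_max_left _ _)
  have hr₁1 : (1:ℝ) ≤ r₁ := le_max_right _ _
  obtain ⟨a, ⟨haf, haS⟩, har⟩ := hub (r₁ + 1)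
  set r₂ : ℝ := ‖a‖ + 1 with hr₂
  set A : Set (Eucl n) := S ∩ {x | r₁ ≤ ‖x‖ ∧ ‖x‖ ≤ r₂} with hA
  have hAclosed : IsClosed A :=
    hScl.inter ((isClosed_le continuous_const continuous_norm).inter
      (isClosed_le continuous_norm continuous_const))
  have hAcpt : IsCompact A :=
    (isCompact_closedBall (0:Eucl n) r₂).of_isClosed_subset hAclosed
      (fun x hx => mem_closedBall_zero_iff.2 hx.2.2)
  have haA : a ∈ A := ⟨haS, ⟨by linarith, by rw [hr₂]; linarith⟩⟩
  obtain ⟨m', hm'⟩ := lsc_bddBelow_on_compact hAcpt hbot hlsc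
  set faR := (f a).toReal with hfaR
  have hfa : f a = ((faR : ℝ) : EReal) := (EReal.coe_toReal haf (hbot a)).symm
  have hm'fa : m' ≤ faR := by
    have := hm' a haA; rw [hfa] at this; exact_mod_cast this
  set cc : ℝ := ‖a‖^2 with hcc
  set lam : ℝ := max (faR - m') 0 + 1 with hlam
  have hlam0 : 0 < lam := by
    have := le_max_right (faR - m') 0
    rw [hlam]; linarith
  have hlamf : faR - m' + 1 ≤ lam := by
    have := le_max_left (faR - m') 0
    rw [hlam]; linarith
  -- the truncated epigraph over A
  set E' : Set (Eucl n × ℝ) := {q | q.1 ∈ A ∧ f q.1 ≤ ((q.2 : ℝ) : EReal) ∧ q.2 ∈ Icc m' faR}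
    with hE'
  have hE'closed : IsClosed E' := by
    have h1 : IsClosed ((fun q : Eucl n × ℝ => q.1) ⁻¹' A) := hAclosed.preimage continuous_fst
    have h2 : IsClosed {q : Eucl n × ℝ | f q.1 ≤ ((q.2:ℝ):EReal)} := isClosed_realEpi hlsc
    have h3 : IsClosed ((fun q : Eucl n × ℝ => q.2) ⁻¹' Icc m' faR) :=
      isClosed_Icc.preimage continuous_snd
    exact h1.inter (h2.inter h3)
  have hE'cpt : IsCompact E' :=
    (hAcpt.prod isCompact_Icc).of_isClosed_subset hE'closed (fun q hq => ⟨hq.1, hq.2.2⟩)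
  have hbase' : ((a, faR) : Eucl n × ℝ) ∈ E' :=
    ⟨haA, le_of_eq hfa, ⟨hm'fa, le_refl _⟩⟩
  have hHcont : Continuous (fun q : Eucl n × ℝ => q.2 + lam*(‖q.1‖^2-cc)^2) :=
    continuous_snd.add ((continuous_const.mul
      (((continuous_norm.pow 2).sub continuous_const).pow 2)).comp continuous_fst)
  obtain ⟨q₀, hq₀E, hq₀min⟩ := hE'cpt.exists_isMinOn ⟨_, hbase'⟩ hHcont.continuousOn
  set y := q₀.1 with hy
  set ty := q₀.2 with hty
  have hyA : y ∈ A := hq₀E.1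
  have hyS : y ∈ S := hyA.1
  have hfyty : f y ≤ ((ty : ℝ) : EReal) := hq₀E.2.1
  have htym : m' ≤ ty := hq₀E.2.2.1
  have hyfne : f y ≠ ⊤ := (lt_of_le_of_lt hfyty (EReal.coe_lt_top _)).ne
  have hfyco : f y = (((f y).toReal : ℝ) : EReal) := (EReal.coe_toReal hyfne (hbot y)).symm
  have htyeq : ty = (f y).toReal := by
    have hs1 : (f y).toReal ≤ ty := by
      have := hfyty; rw [hfyco] at this; exact_mod_cast this
    have hsm : m' ≤ (f y).toReal := by
      have := hm' y hyA; rw [hfyco] at this; exact_mod_cast this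
    have hq : ((y, (f y).toReal) : Eucl n × ℝ) ∈ E' :=
      ⟨hyA, le_of_eq hfyco, ⟨hsm, hs1.trans hq₀E.2.2.2⟩⟩
    have hineq := isMinOn_iff.mp hq₀min _ hq
    simp only [hy, hty] at hineq hs1 ⊢
    linarith
  have hH0 : ty + lam*(‖y‖^2-cc)^2 ≤ faR := by
    have hineq := isMinOn_iff.mp hq₀min _ hbase'
    have hz : lam*(‖a‖^2-cc)^2 = 0 := by rw [hcc]; ring_nf
    simp only [hy, hty] at hineq ⊢
    rw [hz] at hineq
    linarith
  -- interiority
  have hry : r₁ < ‖y‖ ∧ ‖y‖ < r₂ := by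
    by_contra hcon
    have hb1 : r₁ ≤ ‖y‖ := hyA.2.1
    have hb2 : ‖y‖ ≤ r₂ := hyA.2.2
    have hcases : ‖y‖ = r₁ ∨ ‖y‖ = r₂ := by
      rcases lt_or_eq_of_le hb1 with h | h
      · rcases lt_or_eq_of_le hb2 with h' | h'
        · exact absurd ⟨h, h'⟩ hcon
        · exact Or.inr h'
      · exact Or.inl h.symm
    have hsq1 : 1 ≤ (‖y‖^2-cc)^2 := by
      rcases hcases with h | h
      · have hage : r₁ + 1 ≤ ‖a‖ := har.le
        have : ‖y‖^2 + 1 ≤ cc := by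
          rw [h, hcc]
          nlinarith [hr₁1]
        nlinarith
      · have : cc + 1 ≤ ‖y‖^2 := by
          rw [h, hcc, hr₂]
          nlinarith [norm_nonneg a]
        nlinarith
    have : faR + 1 ≤ ty + lam*(‖y‖^2-cc)^2 := by
      have h1 : lam ≤ lam*(‖y‖^2-cc)^2 := by nlinarith
      linarith
    linarith
  set ρ : ℝ := min (‖y‖ - r₁) (r₂ - ‖y‖) with hρdef
  have hρpos : 0 < ρ := lt_min (by linarith [hry.1]) (by linarith [hry.2])
  have hminloc : ∀ x ∈ S, ‖x - y‖ < ρ →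
      (((f y).toReal + lam*(‖y‖^2-cc)^2 - lam*(‖x‖^2-cc)^2 : ℝ) : EReal) ≤ f x := by
    intro x hxS hxρ
    have happrox : |‖x‖ - ‖y‖| ≤ ‖x - y‖ := abs_norm_sub_norm_le x y
    have hxr1 : r₁ ≤ ‖x‖ := by
      have h1 : ρ ≤ ‖y‖ - r₁ := min_le_left _ _
      have := abs_le.1 happrox
      linarith
    have hxr2 : ‖x‖ ≤ r₂ := by
      have h1 : ρ ≤ r₂ - ‖y‖ := min_le_right _ _
      have := abs_le.1 happrox
      linarith
    have hxA : x ∈ A := ⟨hxS, ⟨hxr1, hxr2⟩⟩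
    by_cases hcase : f x ≤ ((faR : ℝ) : EReal)
    · have hxtop : f x ≠ ⊤ := (lt_of_le_of_lt hcase (EReal.coe_lt_top _)).ne
      have hxco : f x = (((f x).toReal : ℝ) : EReal) := (EReal.coe_toReal hxtop (hbot x)).symm
      have hxm : m' ≤ (f x).toReal := by
        have := hm' x hxA; rw [hxco] at this; exact_mod_cast this
      have hxT : (f x).toReal ≤ faR := by
        rw [hxco] at hcase; exact_mod_cast hcase
      have hq : ((x, (f x).toReal) : Eucl n × ℝ) ∈ E' := ⟨hxA, le_of_eq hxco, ⟨hxm, hxT⟩⟩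
      have hineq := isMinOn_iff.mp hq₀min _ hq
      simp only [hy, hty] at hineq
      rw [hxco, EReal.coe_le_coe_iff, ← htyeq]
      simp only [hy, hty] at htyeq ⊢
      linarith
    · have hhuge : ((faR : ℝ) : EReal) < f x := not_le.1 hcase
      refine le_trans ?_ hhuge.le
      rw [EReal.coe_le_coe_iff, ← htyeq]
      have h1 : 0 ≤ lam*(‖x‖^2-cc)^2 := mul_nonneg hlam0.le (sq_nonneg _)
      linarith
  rcases key_lemma f S hlsc hbot hScl lam cc hlam0.le hyS hyfne hρpos hminloc with
    ⟨v, hv, w, hw, hsum⟩ | ⟨z, hz0, hzmem⟩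
  · refine ⟨y, ⟨hyfne, hyS, ⟨4*lam*(‖y‖^2-cc), ?_⟩⟩, lt_of_le_of_lt hr₁M hry.1⟩
    have hmem := Set.add_mem_add (Set.add_mem_add hv hw)
      (Set.mem_singleton ((4*lam*(‖y‖^2-cc)) • y))
    rwa [hsum] at hmem
  · exfalso
    have hset := hR₀ y hyfne hyS (lt_of_le_of_lt hr₁R hry.1)
    have : z ∈ ({0} : Set (Eucl n)) := hset ▸ hzmem
    rw [Set.mem_singleton_iff] at this
    exact hz0 this

theorem stmt13 {n : ℕ} (f : Eucl n → EReal) (S : Set (Eucl n))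
    (hlsc : LowerSemicontinuous f) (hbot : ∀ x, f x ≠ ⊥) (hfsa : SemialgebraicFn f)
    (hScl : IsClosed S) (hSsa : IsSemialgebraic S)
    (hne : ({x | f x ≠ ⊤} ∩ S).Nonempty)
    (hub : ∀ M : ℝ, ∃ x ∈ {x | f x ≠ ⊤} ∩ S, M < ‖x‖)
    (hqc : QCinf f S) :
    (tangencyVariety f S).Nonempty ∧ ∀ M : ℝ, ∃ x ∈ tangencyVariety f S, M < ‖x‖ := by
  have h := stmt13' f S hlsc hbot hScl hne hub hqc
  refine ⟨?_, h⟩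
  obtain ⟨x, hx, -⟩ := h 0
  exact ⟨x, hx⟩
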